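/- Define, for a bipartite state ρ_{RB} and λ ≥ 0, the smoothing quantity δ_{R:B}(ρ_{RB}, λ) := min { P(ρ̃_{RB}, ρ_{RB}) : ρ̃_{RB} a subnormalized state, σ_B a state, ρ̃_{RB} ≤ 2^λ ρ_R ⊗ σ_B }. Then for λ ≥ 0, the minimizer ρ̃ can be taken to be a normalized state; i.e., δ_{R:B}(ρ_{RB}, λ) = min { P(ρ̃, ρ) : ρ̃ a normalized state, σ_B a state, ρ̃ ≤ 2^λ ρ_R ⊗ σ_B }. -/

import Mathlib

open scoped Matrix Kronecker ComplexOrder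

open scoped Classical in
/-- Matrix square root of a positive semidefinite matrix (0 otherwise). -/
noncomputable def msqrt {n : Type*} [Fintype n] [DecidableEq n] (A : Matrix n n ℂ) :
    Matrix n n ℂ :=
  if h : A.PosSemidef then
    (h.1.eigenvectorUnitary : Matrix n n ℂ) *
      Matrix.diagonal ((↑) ∘ (Real.sqrt ·) ∘ h.1.eigenvalues) *
      (star h.1.eigenvectorUnitary : Matrix n n ℂ)
  else 0

/-- Trace norm of a matrix. -/
noncomputable def traceNorm {n : Type*} [Fintype n] [DecidableEq n] (A : Matrix n n ℂ) : ℝ :=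
  ((msqrt (Aᴴ * A)).trace).re

/-- Fidelity of two states: `F(ρ,σ) = ‖√ρ √σ‖₁`. -/
noncomputable def fidelity {n : Type*} [Fintype n] [DecidableEq n] (ρ σ : Matrix n n ℂ) : ℝ :=
  traceNorm (msqrt ρ * msqrt σ)

/-- Purified distance `P(ρ,σ) = sqrt (1 - F(ρ,σ)^2)`. -/
noncomputable def pdist {n : Type*} [Fintype n] [DecidableEq n] (ρ σ : Matrix n n ℂ) : ℝ :=
  Real.sqrt (1 - fidelity ρ σ ^ 2)

/-- A quantum state: positive semidefinite with trace one. -/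
def IsState {n : Type*} [Fintype n] [DecidableEq n] (ρ : Matrix n n ℂ) : Prop :=
  ρ.PosSemidef ∧ ρ.trace = 1

/-- A pure state: a rank-one projection state. -/
def IsPureState {n : Type*} [Fintype n] [DecidableEq n] (ρ : Matrix n n ℂ) : Prop :=
  IsState ρ ∧ ρ * ρ = ρ

/-- Real power of a Hermitian matrix via the spectral decomposition (0 for non-Hermitian). -/
noncomputable def mrpow {n : Type*} [Fintype n] [DecidableEq n] (A : Matrix n n ℂ) (r : ℝ) :
    Matrix n n ℂ :=
  if h : A.IsHermitian then
    (h.eigenvectorUnitary : Matrix n n ℂ) *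
      Matrix.diagonal (fun i => ((h.eigenvalues i ^ r : ℝ) : ℂ)) *
      (star (h.eigenvectorUnitary : Matrix n n ℂ))
  else 0

/-- `Q_α(ρ‖σ) = Tr (σ^{(1-α)/(2α)} ρ σ^{(1-α)/(2α)})^α`. -/
noncomputable def sandwichedQ {n : Type*} [Fintype n] [DecidableEq n] (α : ℝ)
    (ρ σ : Matrix n n ℂ) : ℝ :=
  ((mrpow (mrpow σ ((1 - α) / (2 * α)) * ρ * mrpow σ ((1 - α) / (2 * α))) α).trace).re

/-- Sandwiched Rényi divergence of order α (base-2 logarithm). -/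
noncomputable def sandwichedD {n : Type*} [Fintype n] [DecidableEq n] (α : ℝ)
    (ρ σ : Matrix n n ℂ) : ℝ :=
  (α - 1)⁻¹ * Real.logb 2 (sandwichedQ α ρ σ)

/-- Conjugation by the permutation unitary `W^π` on the n-fold tensor power. -/
def permAct {X : Type*} (n : ℕ) (π : Equiv.Perm (Fin n))
    (M : Matrix (Fin n → X) (Fin n → X) ℂ) : Matrix (Fin n → X) (Fin n → X) ℂ :=
  Matrix.of fun f g => M (f ∘ π) (g ∘ π)

/-- `permAct` as a linear map. -/
def permActL (X : Type*) (n : ℕ) (π : Equiv.Perm (Fin n)) :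
    Matrix (Fin n → X) (Fin n → X) ℂ →ₗ[ℂ] Matrix (Fin n → X) (Fin n → X) ℂ where
  toFun := permAct n π
  map_add' _ _ := rfl
  map_smul' _ _ := rfl

/-- Symmetrization of a channel: `(1/n!) Σ_π W^{π⁻¹} ∘ Λ ∘ W^π`. -/
noncomputable def symmetrize {A B : Type*} (n : ℕ)
    (Λ : Matrix (Fin n → A) (Fin n → A) ℂ →ₗ[ℂ] Matrix (Fin n → B) (Fin n → B) ℂ) :
    Matrix (Fin n → A) (Fin n → A) ℂ →ₗ[ℂ] Matrix (Fin n → B) (Fin n → B) ℂ :=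
  ((n.factorial : ℂ))⁻¹ • ∑ π : Equiv.Perm (Fin n),
    (permActL B n π⁻¹) ∘ₗ Λ ∘ₗ (permActL A n π)

/-- The extension `id_R ⊗ Φ` of a superoperator, acting blockwise. -/
def idTensor (R : Type*) {A B : Type*} [Fintype A] [Fintype B]
    (Φ : Matrix A A ℂ →ₗ[ℂ] Matrix B B ℂ) :
    Matrix (R × A) (R × A) ℂ →ₗ[ℂ] Matrix (R × B) (R × B) ℂ where
  toFun M := Matrix.of fun p q => Φ (Matrix.of fun a a' => M (p.1, a) (q.1, a')) p.2 q.2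
  map_add' M N := by
    ext p q
    show Φ (Matrix.of fun a a' => (M + N) (p.1, a) (q.1, a')) p.2 q.2 = _
    rw [show (Matrix.of fun a a' => (M + N) (p.1, a) (q.1, a'))
        = (Matrix.of fun a a' => M (p.1, a) (q.1, a'))
          + (Matrix.of fun a a' => N (p.1, a) (q.1, a')) from rfl, map_add]
    rfl
  map_smul' c M := by
    ext p q
    show Φ (Matrix.of fun a a' => (c • M) (p.1, a) (q.1, a')) p.2 q.2 = _
    rw [show (Matrix.of fun a a' => (c • M) (p.1, a) (q.1, a'))
        = c • (Matrix.of fun a a' => M (p.1, a) (q.1, a')) from rfl, map_smul]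
    rfl

/-- The extension `Φ ⊗ id_S` of a superoperator, acting blockwise. -/
def idTensorR (S : Type*) {A B : Type*} [Fintype A] [Fintype B]
    (Φ : Matrix A A ℂ →ₗ[ℂ] Matrix B B ℂ) :
    Matrix (A × S) (A × S) ℂ →ₗ[ℂ] Matrix (B × S) (B × S) ℂ where
  toFun M := Matrix.of fun p q => Φ (Matrix.of fun a a' => M (a, p.2) (a', q.2)) p.1 q.1
  map_add' M N := by
    ext p q
    show Φ (Matrix.of fun a a' => (M + N) (a, p.2) (a', q.2)) p.1 q.1 = _
    rw [show (Matrix.of fun a a' => (M + N) (a, p.2) (a', q.2))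
        = (Matrix.of fun a a' => M (a, p.2) (a', q.2))
          + (Matrix.of fun a a' => N (a, p.2) (a', q.2)) from rfl, map_add]
    rfl
  map_smul' c M := by
    ext p q
    show Φ (Matrix.of fun a a' => (c • M) (a, p.2) (a', q.2)) p.1 q.1 = _
    rw [show (Matrix.of fun a a' => (c • M) (a, p.2) (a', q.2))
        = c • (Matrix.of fun a a' => M (a, p.2) (a', q.2)) from rfl, map_smul]
    rfl

/-- Choi matrix of a superoperator. -/
noncomputable def choi {A B : Type*} [Fintype A] [DecidableEq A] [Fintype B]
    (Φ : Matrix A A ℂ →ₗ[ℂ] Matrix B B ℂ) : Matrix (A × B) (A × B) ℂ :=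
  Matrix.of fun p q => Φ (Matrix.single p.1 q.1 1) p.2 q.2

/-- Quantum channel: completely positive (PSD Choi matrix) and trace-preserving. -/
def IsCPTP {A B : Type*} [Fintype A] [DecidableEq A] [Fintype B] [DecidableEq B]
    (Φ : Matrix A A ℂ →ₗ[ℂ] Matrix B B ℂ) : Prop :=
  (choi Φ).PosSemidef ∧ ∀ ρ, (Φ ρ).trace = ρ.trace

/-- n-fold tensor power `N^{⊗n}` of a superoperator, defined entrywise on the
standard matrix-unit basis. -/
noncomputable def tensorPow {A B : Type*} [Fintype A] [DecidableEq A] [Fintype B] [DecidableEq B]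
    (N : Matrix A A ℂ →ₗ[ℂ] Matrix B B ℂ) (n : ℕ) :
    Matrix (Fin n → A) (Fin n → A) ℂ →ₗ[ℂ] Matrix (Fin n → B) (Fin n → B) ℂ where
  toFun ρ := Matrix.of fun F G => ∑ f : Fin n → A, ∑ g : Fin n → A,
    ρ f g * ∏ i, (N (Matrix.single (f i) (g i) 1)) (F i) (G i)
  map_add' ρ σ := by
    ext F G
    simp [Matrix.add_apply, add_mul, Finset.sum_add_distrib]
  map_smul' c ρ := by
    ext F G
    simp [Matrix.smul_apply, Finset.mul_sum, mul_assoc]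

/-- Partial trace over the first tensor factor. -/
noncomputable def ptraceFst {R S : Type*} [Fintype R] (M : Matrix (R × S) (R × S) ℂ) : Matrix S S ℂ :=
  Matrix.of fun s s' => ∑ r, M (r, s) (r, s')

/-- Partial trace over the second tensor factor. -/
noncomputable def ptraceSnd {R S : Type*} [Fintype S] (M : Matrix (R × S) (R × S) ℂ) : Matrix R R ℂ :=
  Matrix.of fun r r' => ∑ s, M (r, s) (r', s)

/-- Rényi mutual information `I_α(R:B)_ρ = min_{σ_B} D_α(ρ_{RB}‖ρ_R ⊗ σ_B)`. -/
noncomputable def renyiMutualInfo {R B : Type*} [Fintype R] [DecidableEq R]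
    [Fintype B] [DecidableEq B] (α : ℝ) (ρRB : Matrix (R × B) (R × B) ℂ) : ℝ :=
  ⨅ σ : {σ : Matrix B B ℂ // IsState σ}, sandwichedD α ρRB ((ptraceSnd ρRB) ⊗ₖ σ.1)

/-- Canonical purification of a density matrix, with reference in the first factor. -/
noncomputable def canonPurification {A : Type*} [Fintype A] [DecidableEq A]
    (ρ : Matrix A A ℂ) : Matrix (A × A) (A × A) ℂ :=
  Matrix.of fun p q => msqrt ρ p.2 p.1 * star (msqrt ρ q.2 q.1)

/-- Channel Rényi mutual information at a fixed input state. -/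
noncomputable def channelRenyiMI {A B : Type*} [Fintype A] [DecidableEq A]
    [Fintype B] [DecidableEq B] (α : ℝ)
    (N : Matrix A A ℂ →ₗ[ℂ] Matrix B B ℂ) (ρ : Matrix A A ℂ) : ℝ :=
  renyiMutualInfo α ((idTensor A N) (canonPurification ρ))

/-- Channel Rényi mutual information (maximized over input states). -/
noncomputable def channelRenyiMIsup {A B : Type*} [Fintype A] [DecidableEq A]
    [Fintype B] [DecidableEq B] (α : ℝ)
    (N : Matrix A A ℂ →ₗ[ℂ] Matrix B B ℂ) : ℝ :=
  ⨆ ρ : {ρ : Matrix A A ℂ // IsState ρ}, channelRenyiMI α N ρ.1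

/-- Generalized fidelity for subnormalized states. -/
noncomputable def gfidelity {n : Type*} [Fintype n] [DecidableEq n] (ρ σ : Matrix n n ℂ) : ℝ :=
  fidelity ρ σ + Real.sqrt ((1 - ρ.trace.re) * (1 - σ.trace.re))

/-- Purified distance for subnormalized states. -/
noncomputable def pdistSub {n : Type*} [Fintype n] [DecidableEq n] (ρ σ : Matrix n n ℂ) : ℝ :=
  Real.sqrt (1 - gfidelity ρ σ ^ 2)

/-- Subnormalized state. -/
def IsSubState {n : Type*} [Fintype n] [DecidableEq n] (ρ : Matrix n n ℂ) : Prop :=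
  ρ.PosSemidef ∧ ρ.trace.re ≤ 1

/-- Smoothing quantity for the max-information (with normalized smoothing states). -/
noncomputable def deltaRB {R B : Type*} [Fintype R] [DecidableEq R] [Fintype B] [DecidableEq B]
    (ρ : Matrix (R × B) (R × B) ℂ) (lam : ℝ) : ℝ :=
  sInf {x | ∃ ρ' σ, IsState ρ' ∧ IsState σ ∧
    ((((2 : ℝ) ^ lam : ℝ) : ℂ) • ((ptraceSnd ρ) ⊗ₖ σ) - ρ').PosSemidef ∧ x = pdist ρ' ρ}

/-- Fully dephasing channel in the standard basis. -/
noncomputable def dephase (X : Type*) [Fintype X] [DecidableEq X] :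
    Matrix X X ℂ →ₗ[ℂ] Matrix X X ℂ where
  toFun ρ := Matrix.of fun x y => if x = y then ρ x x else 0
  map_add' ρ τ := by
    ext x y
    by_cases h : x = y <;> simp [h, Matrix.add_apply]
  map_smul' c ρ := by
    ext x y
    by_cases h : x = y <;> simp [h, Matrix.smul_apply]

set_option linter.unusedSectionVars false
section Lemmas
variable {n : Type*} [Fintype n] [DecidableEq n]

lemma msqrt_of_psd {A : Matrix n n ℂ} (h : A.PosSemidef) : msqrt A =
    (h.1.eigenvectorUnitary : Matrix n n ℂ) *
      Matrix.diagonal ((↑) ∘ (Real.sqrt ·) ∘ h.1.eigenvalues) *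
      (star h.1.eigenvectorUnitary : Matrix n n ℂ) := dif_pos h

lemma msqrt_posSemidef {A : Matrix n n ℂ} (h : A.PosSemidef) : (msqrt A).PosSemidef := by
  rw [msqrt_of_psd h, Matrix.star_eq_conjTranspose]
  refine Matrix.PosSemidef.mul_mul_conjTranspose_same ?_ _
  rw [Matrix.posSemidef_diagonal_iff]
  intro i
  simp only [Function.comp_apply]
  exact_mod_cast Real.sqrt_nonneg _

lemma msqrt_mul_self {A : Matrix n n ℂ} (h : A.PosSemidef) : msqrt A * msqrt A = A := by
  rw [msqrt_of_psd h]
  have h1 : (star (h.1.eigenvectorUnitary : Matrix n n ℂ)) * (h.1.eigenvectorUnitary : Matrix n n ℂ) = 1 :=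
    (Matrix.mem_unitaryGroup_iff').mp (h.1.eigenvectorUnitary).2
  have hs := h.1.spectral_theorem
  rw [Unitary.conjStarAlgAut_apply] at hs
  refine Eq.trans ?_ hs.symm
  simp only [Matrix.mul_assoc]
  rw [← Matrix.mul_assoc (star (h.1.eigenvectorUnitary : Matrix n n ℂ)) _ _, h1,
    Matrix.one_mul, ← Matrix.mul_assoc (Matrix.diagonal _) (Matrix.diagonal _) _,
    Matrix.diagonal_mul_diagonal]
  congr 3
  funext i
  simp only [Function.comp_apply, ← Complex.ofReal_mul, Real.mul_self_sqrt (h.eigenvalues_nonneg i)]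
  rfl

lemma herm_star_mul_self_mul {A' : Matrix n n ℂ} (hA' : A'.IsHermitian) :
    star (hA'.eigenvectorUnitary : Matrix n n ℂ) * A' * (hA'.eigenvectorUnitary : Matrix n n ℂ)
      = Matrix.diagonal (fun i => (hA'.eigenvalues i : ℂ)) := by
  have h1 : (star (hA'.eigenvectorUnitary : Matrix n n ℂ)) * (hA'.eigenvectorUnitary : Matrix n n ℂ) = 1 :=
    (Matrix.mem_unitaryGroup_iff').mp (hA'.eigenvectorUnitary).2
  have hs := hA'.spectral_theorem
  rw [Unitary.conjStarAlgAut_apply] at hs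
  refine (congrArg (fun X => star (hA'.eigenvectorUnitary : Matrix n n ℂ) * X * (hA'.eigenvectorUnitary : Matrix n n ℂ)) hs).trans ?_
  simp only [Matrix.mul_assoc, h1, Matrix.mul_one]
  rw [← Matrix.mul_assoc, h1, Matrix.one_mul]
  rfl

lemma psd_trace_re_nonneg {A : Matrix n n ℂ} (h : A.PosSemidef) : 0 ≤ A.trace.re := by
  have : ∀ i, 0 ≤ (A i i).re := by
    intro i
    exact (Complex.le_def.mp h.diag_nonneg).1
  rw [Matrix.trace]
  simpa [Complex.re_sum] using Finset.sum_nonneg fun i _ => this i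

lemma herm_trace_real {A : Matrix n n ℂ} (h : A.IsHermitian) : A.trace = (A.trace.re : ℂ) := by
  have := Matrix.trace_conjTranspose A
  rw [h.eq] at this
  exact (Complex.conj_eq_iff_re.mp this.symm).symm

lemma smul_posSemidef {A : Matrix n n ℂ} {c : ℝ} (hc : 0 ≤ c) (h : A.PosSemidef) :
    ((c : ℂ) • A).PosSemidef := by
  constructor
  · unfold Matrix.IsHermitian
    rw [Matrix.conjTranspose_smul, h.1.eq, Complex.star_def, Complex.conj_ofReal]
  · intro x
    exact (h.smul (a := (c : ℂ)) (by exact_mod_cast hc)).2 x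

lemma kron_conjTranspose {m l p q : Type*} (A : Matrix m l ℂ) (B : Matrix p q ℂ) :
    (A ⊗ₖ B)ᴴ = Aᴴ ⊗ₖ Bᴴ := by
  ext ⟨i, j⟩ ⟨k, l'⟩
  simp [Matrix.conjTranspose_apply, Matrix.kroneckerMap_apply, mul_comm]

lemma kron_posSemidef {m p : Type*} [Fintype m] [DecidableEq m] [Fintype p] [DecidableEq p]
    {A : Matrix m m ℂ} {B : Matrix p p ℂ} (hA : A.PosSemidef) (hB : B.PosSemidef) :
    (A ⊗ₖ B).PosSemidef := by
  exact hA.kronecker hB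


section Dmat
variable {A' : Matrix n n ℂ} (hA' : A'.IsHermitian)

/-- conjugated diagonal matrix in the eigenbasis of A' -/
noncomputable def Dm (hA' : A'.IsHermitian) (f : n → ℝ) : Matrix n n ℂ :=
  (hA'.eigenvectorUnitary : Matrix n n ℂ) * Matrix.diagonal (fun i => (f i : ℂ)) *
    (star (hA'.eigenvectorUnitary : Matrix n n ℂ))

lemma Dm_mul (f g : n → ℝ) : Dm hA' f * Dm hA' g = Dm hA' (f * g) := by
  unfold Dm
  have h1 : (star (hA'.eigenvectorUnitary : Matrix n n ℂ)) * (hA'.eigenvectorUnitary : Matrix n n ℂ) = 1 :=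
    (Matrix.mem_unitaryGroup_iff').mp (hA'.eigenvectorUnitary).2
  simp only [Matrix.mul_assoc]
  rw [← Matrix.mul_assoc (star (hA'.eigenvectorUnitary : Matrix n n ℂ)) _ _, h1,
    Matrix.one_mul, ← Matrix.mul_assoc (Matrix.diagonal _) (Matrix.diagonal _) _,
    Matrix.diagonal_mul_diagonal]
  simp [Pi.mul_apply, Complex.ofReal_mul]

lemma Dm_herm (f : n → ℝ) : (Dm hA' f).IsHermitian := by
  simp only [Matrix.IsHermitian, Dm, Matrix.conjTranspose_mul, Matrix.diagonal_conjTranspose,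
    Matrix.star_eq_conjTranspose, Matrix.conjTranspose_conjTranspose, Matrix.mul_assoc]
  congr 1
  congr 1
  funext i j
  by_cases h : i = j <;> simp [Matrix.diagonal_apply, h, Complex.conj_ofReal]

lemma Dm_posSemidef (f : n → ℝ) (hf : ∀ i, 0 ≤ f i) : (Dm hA' f).PosSemidef := by
  unfold Dm
  rw [Matrix.star_eq_conjTranspose]
  refine Matrix.PosSemidef.mul_mul_conjTranspose_same ?_ _
  rw [Matrix.posSemidef_diagonal_iff]
  intro i
  exact_mod_cast hf i

lemma Dm_trace (f : n → ℝ) : (Dm hA' f).trace = ((∑ i, f i : ℝ) : ℂ) := by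
  have h1 : (star (hA'.eigenvectorUnitary : Matrix n n ℂ)) * (hA'.eigenvectorUnitary : Matrix n n ℂ) = 1 :=
    (Matrix.mem_unitaryGroup_iff').mp (hA'.eigenvectorUnitary).2
  unfold Dm
  rw [Matrix.trace_mul_cycle, h1, Matrix.one_mul, Matrix.trace_diagonal]
  push_cast
  rfl

lemma Dm_spectral : A' = Dm hA' hA'.eigenvalues := hA'.spectral_theorem

lemma Dm_msqrt (hA'p : A'.PosSemidef) :
    msqrt A' = Dm hA'p.1 (fun i => Real.sqrt (hA'p.1.eigenvalues i)) := by
  rw [msqrt_of_psd hA'p]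
  rfl

end Dmat

lemma Dm_one {A' : Matrix n n ℂ} (hA' : A'.IsHermitian) : Dm hA' (fun _ => 1) = 1 := by
  unfold Dm
  have h : Matrix.diagonal (fun _ : n => ((1:ℝ):ℂ)) = 1 := by
    simp
  rw [h, Matrix.mul_one]
  exact (Matrix.mem_unitaryGroup_iff).mp (hA'.eigenvectorUnitary).2

lemma Dm_mul_trace {A' : Matrix n n ℂ} (hA' : A'.IsHermitian) (f : n → ℝ) :
    (Dm hA' f * A').trace = ((∑ i, f i * hA'.eigenvalues i : ℝ) : ℂ) := by
  unfold Dm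
  rw [Matrix.trace_mul_comm]
  simp only [← Matrix.mul_assoc]
  rw [Matrix.trace_mul_cycle (A' * (hA'.eigenvectorUnitary : Matrix n n ℂ))
    (Matrix.diagonal (fun i => ((f i : ℝ) : ℂ))) (star (hA'.eigenvectorUnitary : Matrix n n ℂ))]
  simp only [← Matrix.mul_assoc]
  rw [herm_star_mul_self_mul hA', Matrix.diagonal_mul_diagonal, Matrix.trace_diagonal]
  push_cast
  exact Finset.sum_congr rfl fun i _ => by simp [Function.comp, mul_comm]

lemma trace_sqrt_mono {M M' : Matrix n n ℂ} (hM : M.PosSemidef) (hM' : M'.PosSemidef)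
    (hle : (M' - M).PosSemidef) :
    (msqrt M).trace.re ≤ (msqrt M').trace.re := by
  have H : M'.IsHermitian := hM'.1
  set lam : n → ℝ := H.eigenvalues with hlamdef
  have hlam0 : ∀ i, 0 ≤ lam i := hM'.eigenvalues_nonneg
  have htrM' : (msqrt M').trace = ((∑ i, Real.sqrt (lam i) : ℝ) : ℂ) := by
    rw [Dm_msqrt hM', Dm_trace]
  have main : ∀ ε : ℝ, 0 < ε →
      2 * (msqrt M).trace.re ≤ 2 * (msqrt M').trace.re + (Fintype.card n) * ε := by
    intro ε hε
    set p : n → ℝ := fun i => (Real.sqrt (Real.sqrt (lam i) + ε))⁻¹ with hp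
    set q : n → ℝ := fun i => Real.sqrt (Real.sqrt (lam i) + ε) with hq
    have hbase : ∀ i, 0 < Real.sqrt (lam i) + ε := fun i => by
      have := Real.sqrt_nonneg (lam i); linarith
    have hqpos : ∀ i, 0 < q i := fun i => Real.sqrt_pos.mpr (hbase i)
    set S := msqrt M with hSdef
    have hSh : S.IsHermitian := (msqrt_posSemidef hM).1
    have hSS : S * S = M := msqrt_mul_self hM
    set P := Dm H p with hPdef
    set Q := Dm H q with hQdef
    have hpq1 : p * q = fun _ => (1:ℝ) := by
      funext i
      exact inv_mul_cancel₀ (hqpos i).ne'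
    have hqp1 : q * p = fun _ => (1:ℝ) := by
      rw [mul_comm]; exact hpq1
    have hPQ : P * Q = 1 := by rw [hPdef, hQdef, Dm_mul, hpq1, Dm_one]
    have hQP : Q * P = 1 := by rw [hPdef, hQdef, Dm_mul, hqp1, Dm_one]
    set C := P * S - Q with hCdef
    have hCh : Cᴴ = S * P - Q := by
      rw [hCdef, Matrix.conjTranspose_sub, Matrix.conjTranspose_mul, hSh.eq,
        (Dm_herm H p).eq, (Dm_herm H q).eq]
    have expand : Cᴴ * C = S * (P * P) * S - S * (P * Q) - Q * P * S + Q * Q := by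
      rw [hCh, hCdef]
      noncomm_ring
    rw [hPQ, hQP, Matrix.mul_one, Matrix.one_mul] at expand
    have htr := psd_trace_re_nonneg (Matrix.posSemidef_conjTranspose_mul_self C)
    rw [expand] at htr
    simp only [Matrix.trace_sub, Matrix.trace_add, Complex.sub_re, Complex.add_re] at htr
    -- tr(S (P*P) S) = tr((P*P) M)
    have hv0 : (S * (P * P) * S).trace = (P * P * M).trace := by
      rw [← Matrix.trace_mul_cycle (P * P) S S, Matrix.mul_assoc, hSS]
    -- monotonicity step
    have hmono : (P * P * M).trace.re ≤ (P * P * M').trace.re := by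
      have hpsd : (P * (M' - M) * Pᴴ).PosSemidef := hle.mul_mul_conjTranspose_same P
      rw [(Dm_herm H p).eq] at hpsd
      have h2 := psd_trace_re_nonneg hpsd
      rw [Matrix.trace_mul_cycle P (M' - M) P, Matrix.mul_sub,
        Matrix.trace_sub, Complex.sub_re] at h2
      linarith
    -- value computations
    have hval1 : (P * P * M').trace = ((∑ i, (p i * p i) * lam i : ℝ) : ℂ) := by
      rw [hPdef, Dm_mul, Dm_mul_trace]
      norm_cast
    have hval2 : (Q * Q).trace = ((∑ i, (Real.sqrt (lam i) + ε) : ℝ) : ℂ) := by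
      rw [hQdef, Dm_mul, Dm_trace]
      norm_cast
      exact Finset.sum_congr rfl fun i _ => Real.mul_self_sqrt (hbase i).le
    have key : ∀ i ∈ Finset.univ, (p i * p i) * lam i ≤ Real.sqrt (lam i) := by
      intro i _
      have ha : 0 ≤ Real.sqrt (lam i) := Real.sqrt_nonneg _
      have hpp : p i * p i = (Real.sqrt (lam i) + ε)⁻¹ := by
        rw [hp, ← mul_inv, Real.mul_self_sqrt (hbase i).le]
      have hla : lam i = Real.sqrt (lam i) * Real.sqrt (lam i) :=
        (Real.mul_self_sqrt (hlam0 i)).symm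
      calc (p i * p i) * lam i
          = (Real.sqrt (lam i) + ε)⁻¹ * (Real.sqrt (lam i) * Real.sqrt (lam i)) := by
            rw [hpp, ← hla]
        _ ≤ Real.sqrt (lam i) := by
            rw [inv_mul_le_iff₀ (hbase i)]
            nlinarith
    have hsum : ∑ i, (p i * p i) * lam i ≤ ∑ i, Real.sqrt (lam i) :=
      Finset.sum_le_sum key
    have hval2' : (Q * Q).trace.re = (∑ i, Real.sqrt (lam i)) + (Fintype.card n) * ε := by
      rw [hval2, Complex.ofReal_re, Finset.sum_add_distrib]
      simp [Finset.card_univ, mul_comm]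
    have htrM'' : (msqrt M').trace.re = ∑ i, Real.sqrt (lam i) := by
      rw [htrM', Complex.ofReal_re]
    have hval1' : (P * P * M').trace.re = ∑ i, (p i * p i) * lam i := by
      rw [hval1, Complex.ofReal_re]
    have hv0' : (S * (P * P) * S).trace.re = (P * P * M).trace.re := by rw [hv0]
    rw [htrM'']
    linarith
  refine le_of_forall_pos_le_add fun ε' hε' => ?_
  have hc : (0:ℝ) < (Fintype.card n : ℝ) + 1 := by positivity
  have h := main (2 * ε' / ((Fintype.card n : ℝ) + 1)) (by positivity)
  have hb : (Fintype.card n : ℝ) * (2 * ε' / ((Fintype.card n : ℝ) + 1)) ≤ 2 * ε' := by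
    rw [mul_div_assoc', div_le_iff₀ hc]
    nlinarith [Nat.cast_nonneg (α := ℝ) (Fintype.card n), hε'.le]
  linarith

end Lemmas


section Lemmas2
set_option linter.unusedSectionVars false
variable {n : Type*} [Fintype n] [DecidableEq n]

lemma traceNorm_nonneg (A : Matrix n n ℂ) : 0 ≤ traceNorm A :=
  psd_trace_re_nonneg (msqrt_posSemidef (Matrix.posSemidef_conjTranspose_mul_self A))

lemma fidelity_nonneg (A B : Matrix n n ℂ) : 0 ≤ fidelity A B := traceNorm_nonneg _

lemma fidelity_eq {A B : Matrix n n ℂ} (hA : A.PosSemidef) (hB : B.PosSemidef) :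
    fidelity A B = (msqrt (msqrt B * A * msqrt B)).trace.re := by
  unfold fidelity traceNorm
  congr 3
  rw [Matrix.conjTranspose_mul, (msqrt_posSemidef hA).1.eq, (msqrt_posSemidef hB).1.eq,
    Matrix.mul_assoc, ← Matrix.mul_assoc (msqrt A) (msqrt A) (msqrt B), msqrt_mul_self hA,
    ← Matrix.mul_assoc]

lemma fidelity_mono {A A' B : Matrix n n ℂ} (hA : A.PosSemidef) (hA' : A'.PosSemidef)
    (hB : B.PosSemidef) (h : (A' - A).PosSemidef) : fidelity A B ≤ fidelity A' B := by
  rw [fidelity_eq hA hB, fidelity_eq hA' hB]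
  have hM : (msqrt B * A * msqrt B).PosSemidef := by
    have := hA.conjTranspose_mul_mul_same (msqrt B)
    rwa [(msqrt_posSemidef hB).1.eq] at this
  have hM' : (msqrt B * A' * msqrt B).PosSemidef := by
    have := hA'.conjTranspose_mul_mul_same (msqrt B)
    rwa [(msqrt_posSemidef hB).1.eq] at this
  refine trace_sqrt_mono hM hM' ?_
  have hd : msqrt B * A' * msqrt B - msqrt B * A * msqrt B
      = msqrt B * (A' - A) * msqrt B := by
    rw [Matrix.mul_sub, Matrix.sub_mul]
  rw [hd]
  have := h.conjTranspose_mul_mul_same (msqrt B)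
  rwa [(msqrt_posSemidef hB).1.eq] at this

lemma pdistSub_eq_pdist {ρ' ρ : Matrix n n ℂ} (hρtr : ρ.trace = 1) :
    pdistSub ρ' ρ = pdist ρ' ρ := by
  unfold pdistSub pdist gfidelity
  rw [hρtr]
  norm_num

variable {R B : Type*} [Fintype R] [DecidableEq R] [Fintype B] [DecidableEq B]

lemma ptraceSnd_trace (M : Matrix (R × B) (R × B) ℂ) : (ptraceSnd M).trace = M.trace := by
  simp [ptraceSnd, Matrix.trace, Matrix.diag, Fintype.sum_prod_type]

lemma ptraceSnd_posSemidef {M : Matrix (R × B) (R × B) ℂ} (h : M.PosSemidef) :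
    (ptraceSnd M).PosSemidef := by
  refine Matrix.PosSemidef.of_dotProduct_mulVec_nonneg ?_ ?_
  · ext r r'
    simp only [Matrix.conjTranspose_apply, ptraceSnd, Matrix.of_apply, star_sum]
    exact Finset.sum_congr rfl fun s _ => h.1.apply _ _
  · intro x
    have key : dotProduct (star x) (ptraceSnd M *ᵥ x)
        = ∑ b : B, dotProduct (star fun p : R × B => if p.2 = b then x p.1 else 0)
            (M *ᵥ fun p : R × B => if p.2 = b then x p.1 else 0) := by
      simp only [dotProduct, Matrix.mulVec, ptraceSnd, Matrix.of_apply, Pi.star_apply,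
        Fintype.sum_prod_type, apply_ite (star : ℂ → ℂ), star_zero, ite_mul, zero_mul,
        mul_ite, mul_zero, Finset.sum_ite_eq', Finset.mem_univ, if_true, Finset.mul_sum,
        Finset.sum_mul]
      have step1 : ∀ b : B, (∑ x2 : R, ∑ x3 : B, ∑ x4 : R,
          if x3 = b then star (x x2) * (M (x2, x3) (x4, b) * x x4) else 0)
          = ∑ x2 : R, ∑ x4 : R, star (x x2) * (M (x2, b) (x4, b) * x x4) := by
        intro b
        refine Finset.sum_congr rfl fun r _ => ?_
        rw [Finset.sum_comm]
        simp
      simp only [step1]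
      have step2 : ∀ r : R, (∑ r' : R, ∑ b : B, star (x r) * (M (r, b) (r', b) * x r'))
          = ∑ b : B, ∑ r' : R, star (x r) * (M (r, b) (r', b) * x r') :=
        fun r => Finset.sum_comm
      simp only [step2]
      exact Finset.sum_comm
    rw [key]
    exact Finset.sum_nonneg fun b _ => h.dotProduct_mulVec_nonneg _

end Lemmas2

theorem delta_smoothing_normalized {R B : Type*} [Fintype R] [DecidableEq R]
    [Fintype B] [DecidableEq B]
    (ρ : Matrix (R × B) (R × B) ℂ) (hρ : IsState ρ) (lam : ℝ) (hlam : 0 ≤ lam) :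
    sInf {x | ∃ ρ' σ, IsSubState ρ' ∧ IsState σ ∧
        ((((2 : ℝ) ^ lam : ℝ) : ℂ) • ((ptraceSnd ρ) ⊗ₖ σ) - ρ').PosSemidef
        ∧ x = pdistSub ρ' ρ}
      = sInf {x | ∃ ρ' σ, IsState ρ' ∧ IsState σ ∧
        ((((2 : ℝ) ^ lam : ℝ) : ℂ) • ((ptraceSnd ρ) ⊗ₖ σ) - ρ').PosSemidef
        ∧ x = pdist ρ' ρ} := by
  have hρpsd := hρ.1
  have hρtr := hρ.2
  have hc2 : 1 ≤ (2 : ℝ) ^ lam := Real.one_le_rpow one_le_two hlam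
  have hρRpsd : (ptraceSnd ρ).PosSemidef := ptraceSnd_posSemidef hρpsd
  have hρRtr : (ptraceSnd ρ).trace = 1 := by rw [ptraceSnd_trace, hρtr]
  have hne : Nonempty (R × B) := by
    by_contra h
    rw [not_nonempty_iff] at h
    have h0 : ρ.trace = 0 := by
      simp [Matrix.trace, Finset.univ_eq_empty]
    rw [hρtr] at h0
    exact one_ne_zero h0
  have hB : Nonempty B := ⟨hne.some.2⟩
  have hcardB : (0 : ℝ) < Fintype.card B := by exact_mod_cast Fintype.card_pos
  set σ0 : Matrix B B ℂ := (((Fintype.card B : ℝ)⁻¹ : ℝ) : ℂ) • (1 : Matrix B B ℂ) with hσ0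
  have hσ0state : IsState σ0 := by
    constructor
    · exact smul_posSemidef (by positivity) Matrix.PosSemidef.one
    · rw [hσ0, Matrix.trace_smul, Matrix.trace_one, smul_eq_mul]
      rw [← Complex.ofReal_natCast, ← Complex.ofReal_mul]
      rw [inv_mul_cancel₀ hcardB.ne']
      norm_num
  have hK0psd : ((ptraceSnd ρ) ⊗ₖ σ0).PosSemidef := kron_posSemidef hρRpsd hσ0state.1
  have hK0tr : ((ptraceSnd ρ) ⊗ₖ σ0).trace = 1 := by
    rw [Matrix.trace_kronecker, hρRtr, hσ0state.2, one_mul]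
  have hK0state : IsState ((ptraceSnd ρ) ⊗ₖ σ0) := ⟨hK0psd, hK0tr⟩
  have hK0mem : ((((2 : ℝ) ^ lam : ℝ) : ℂ) • ((ptraceSnd ρ) ⊗ₖ σ0)
      - (ptraceSnd ρ) ⊗ₖ σ0).PosSemidef := by
    have he : ((((2 : ℝ) ^ lam : ℝ) : ℂ) • ((ptraceSnd ρ) ⊗ₖ σ0) - (ptraceSnd ρ) ⊗ₖ σ0)
        = ((((2 : ℝ) ^ lam - 1 : ℝ)) : ℂ) • ((ptraceSnd ρ) ⊗ₖ σ0) := by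
      push_cast
      rw [sub_smul, one_smul]
    rw [he]
    exact smul_posSemidef (by linarith) hK0psd
  have hS2ne : {x | ∃ ρ' σ, IsState ρ' ∧ IsState σ ∧
      ((((2 : ℝ) ^ lam : ℝ) : ℂ) • ((ptraceSnd ρ) ⊗ₖ σ) - ρ').PosSemidef
      ∧ x = pdist ρ' ρ}.Nonempty :=
    ⟨pdist ((ptraceSnd ρ) ⊗ₖ σ0) ρ, (ptraceSnd ρ) ⊗ₖ σ0, σ0, hK0state, hσ0state, hK0mem, rfl⟩
  have hS1bdd : BddBelow {x | ∃ ρ' σ, IsSubState ρ' ∧ IsState σ ∧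
      ((((2 : ℝ) ^ lam : ℝ) : ℂ) • ((ptraceSnd ρ) ⊗ₖ σ) - ρ').PosSemidef
      ∧ x = pdistSub ρ' ρ} := by
    refine ⟨0, fun x hx => ?_⟩
    obtain ⟨ρ', σ, _, _, _, rfl⟩ := hx
    exact Real.sqrt_nonneg _
  have hS2bdd : BddBelow {x | ∃ ρ' σ, IsState ρ' ∧ IsState σ ∧
      ((((2 : ℝ) ^ lam : ℝ) : ℂ) • ((ptraceSnd ρ) ⊗ₖ σ) - ρ').PosSemidef
      ∧ x = pdist ρ' ρ} := by
    refine ⟨0, fun x hx => ?_⟩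
    obtain ⟨ρ', σ, _, _, _, rfl⟩ := hx
    exact Real.sqrt_nonneg _
  apply le_antisymm
  · refine csInf_le_csInf hS1bdd hS2ne ?_
    rintro x ⟨ρ', σ, h1, h2, h3, rfl⟩
    exact ⟨ρ', σ, ⟨h1.1, by rw [h1.2]; norm_num⟩, h2, h3, (pdistSub_eq_pdist hρtr).symm⟩
  · have hS1ne : {x | ∃ ρ' σ, IsSubState ρ' ∧ IsState σ ∧
        ((((2 : ℝ) ^ lam : ℝ) : ℂ) • ((ptraceSnd ρ) ⊗ₖ σ) - ρ').PosSemidef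
        ∧ x = pdistSub ρ' ρ}.Nonempty := by
      refine ⟨pdistSub ((ptraceSnd ρ) ⊗ₖ σ0) ρ, (ptraceSnd ρ) ⊗ₖ σ0, σ0,
        ⟨hK0psd, ?_⟩, hσ0state, hK0mem, rfl⟩
      rw [hK0tr]
      norm_num
    refine le_csInf hS1ne ?_
    rintro x ⟨ρ', σ, hsub, hσ, hpos, rfl⟩
    set t := ρ'.trace.re with ht
    have ht1 : t ≤ 1 := hsub.2
    have ht0 : 0 ≤ t := psd_trace_re_nonneg hsub.1
    have hKpsd : ((ptraceSnd ρ) ⊗ₖ σ).PosSemidef := kron_posSemidef hρRpsd hσ.1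
    have hKtr : ((ptraceSnd ρ) ⊗ₖ σ).trace = 1 := by
      rw [Matrix.trace_kronecker, hρRtr, hσ.2, one_mul]
    set Δ := (((2 : ℝ) ^ lam : ℝ) : ℂ) • ((ptraceSnd ρ) ⊗ₖ σ) - ρ' with hΔ
    have hΔpsd : Δ.PosSemidef := hpos
    have hρ'tr : ρ'.trace = (t : ℂ) := herm_trace_real hsub.1.1
    have hΔtr : Δ.trace = (((2 : ℝ) ^ lam - t : ℝ) : ℂ) := by
      rw [hΔ, Matrix.trace_sub, Matrix.trace_smul, hKtr, hρ'tr, smul_eq_mul, mul_one]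
      push_cast
      ring
    set c : ℝ := (1 - t) / ((2 : ℝ) ^ lam - t) with hc
    have hc0 : 0 ≤ c := div_nonneg (by linarith) (by linarith)
    have hkey : t + c * ((2 : ℝ) ^ lam - t) = 1 := by
      rcases eq_or_lt_of_le (show t ≤ (2 : ℝ) ^ lam by linarith) with h | h
      · have h0 : (2 : ℝ) ^ lam - t = 0 := by rw [← h]; ring
        rw [h0, mul_zero, add_zero]
        linarith [hc2, h, ht1]
      · rw [hc, div_mul_cancel₀ _ (by linarith : (2 : ℝ) ^ lam - t ≠ 0)]
        ring
    have hc1 : c ≤ 1 := by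
      rcases eq_or_lt_of_le (show t ≤ (2 : ℝ) ^ lam by linarith) with h | h
      · have h0 : (2 : ℝ) ^ lam - t = 0 := by rw [← h]; ring
        rw [hc, h0, div_zero]
        norm_num
      · rw [hc, div_le_one (by linarith)]
        linarith
    set ρ'' := ρ' + ((c : ℝ) : ℂ) • Δ with hρ''
    have hρ''psd : ρ''.PosSemidef := hsub.1.add (smul_posSemidef hc0 hΔpsd)
    have hρ''tr : ρ''.trace = 1 := by
      rw [hρ'', Matrix.trace_add, Matrix.trace_smul, hρ'tr, hΔtr, smul_eq_mul]
      rw [← Complex.ofReal_mul, ← Complex.ofReal_add, ← Complex.ofReal_one]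
      exact_mod_cast congrArg (Complex.ofReal) hkey
    have hconstr : (((2 : ℝ) ^ lam : ℝ) : ℂ) • ((ptraceSnd ρ) ⊗ₖ σ) - ρ''
        = (((1 - c : ℝ)) : ℂ) • Δ := by
      rw [hρ'', hΔ]
      push_cast
      module
    have hconstrpsd : ((((2 : ℝ) ^ lam : ℝ) : ℂ) • ((ptraceSnd ρ) ⊗ₖ σ) - ρ'').PosSemidef := by
      rw [hconstr]
      exact smul_posSemidef (by linarith) hΔpsd
    have hfid : fidelity ρ' ρ ≤ fidelity ρ'' ρ := by
      refine fidelity_mono hsub.1 hρ''psd hρpsd ?_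
      have hd : ρ'' - ρ' = ((c : ℝ) : ℂ) • Δ := by
        rw [hρ'']
        exact add_sub_cancel_left _ _
      rw [hd]
      exact smul_posSemidef hc0 hΔpsd
    have hle : pdist ρ'' ρ ≤ pdistSub ρ' ρ := by
      rw [pdistSub_eq_pdist hρtr]
      unfold pdist
      apply Real.sqrt_le_sqrt
      have h0 := fidelity_nonneg ρ' ρ
      nlinarith
    exact csInf_le_of_le hS2bdd ⟨ρ'', σ, ⟨hρ''psd, hρ''tr⟩, hσ, hconstrpsd, rfl⟩ hle
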